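/- arXiv:1711.10442 — 9 statements merged into one kernel-verified Lean document; each statement's English description precedes it below -/
import Mathlib

section
/- Let Γ act minimally by homeomorphisms on a Hausdorff space X. For any x ∈ X, the subgroup int(Γ ↷ X) generated by all elements whose fixed-point set has non-empty interior equals the normal closure in Γ of the subgroup Γ_x^∘ of elements fixing some neighborhood of x pointwise. -/
/-- For a minimal action of `Γ` on a Hausdorff space `X` and any `x ∈ X`,
the subgroup `int(Γ ↷ X)` generated by elements whose fixed-point set has non-empty
interior equals the normal closure of `Γ_x^∘`, the set of elements fixing a
neighborhood of `x` pointwise. -/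
theorem stmt_1 {Γ X : Type*} [Group Γ] [TopologicalSpace X] [T2Space X]
    [MulAction Γ X] (hcont : ∀ g : Γ, Continuous (fun x : X => g • x))
    (hmin : ∀ x : X, Dense (MulAction.orbit Γ x)) (x : X) :
    Subgroup.normalClosure
        {g : Γ | ∃ U : Set X, IsOpen U ∧ x ∈ U ∧ ∀ y ∈ U, g • y = y}
      = Subgroup.closure {g : Γ | (interior {y : X | g • y = y}).Nonempty} := by
  set A := {g : Γ | ∃ U : Set X, IsOpen U ∧ x ∈ U ∧ ∀ y ∈ U, g • y = y} with hA
  set B := {g : Γ | (interior {y : X | g • y = y}).Nonempty} with hB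
  have hconjB : ∀ g ∈ B, ∀ h : Γ, h * g * h⁻¹ ∈ B := by
    intro g hg h
    obtain ⟨v, hv⟩ := hg
    refine ⟨h • v, ?_⟩
    have hsub : (fun y : X => h⁻¹ • y) ⁻¹' (interior {y : X | g • y = y})
        ⊆ {y : X | (h * g * h⁻¹) • y = y} := by
      intro y hy
      have h2 : h⁻¹ • y ∈ {y : X | g • y = y} := interior_subset hy
      show (h * g * h⁻¹) • y = y
      rw [mul_smul, mul_smul, show g • (h⁻¹ • y) = h⁻¹ • y from h2, smul_inv_smul]
    have hopen : IsOpen ((fun y : X => h⁻¹ • y) ⁻¹' (interior {y : X | g • y = y})) :=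
      isOpen_interior.preimage (hcont h⁻¹)
    apply interior_maximal hsub hopen
    simp only [Set.mem_preimage, inv_smul_smul]
    exact hv
  apply le_antisymm
  · have hAB : A ⊆ B := by
      rintro g ⟨U, hU, hxU, hfix⟩
      exact ⟨x, interior_maximal (fun y hy => hfix y hy) hU hxU⟩
    have h1 : Group.conjugatesOfSet B ⊆ B := by
      intro a ha
      rw [Group.mem_conjugatesOfSet_iff] at ha
      obtain ⟨b, hb, hc⟩ := ha
      rw [isConj_iff] at hc
      obtain ⟨c, rfl⟩ := hc
      exact hconjB b hb c
    calc Subgroup.normalClosure A ≤ Subgroup.normalClosure B :=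
          Subgroup.normalClosure_mono hAB
      _ = Subgroup.closure (Group.conjugatesOfSet B) := rfl
      _ ≤ Subgroup.closure B := Subgroup.closure_mono h1
  · rw [Subgroup.closure_le]
    intro g hg
    obtain ⟨v, hv⟩ := hg
    obtain ⟨y, hy_orb, hy_mem⟩ :=
      (hmin x).exists_mem_open isOpen_interior ⟨v, hv⟩
    obtain ⟨h, rfl⟩ := hy_orb
    have hA : h⁻¹ * g * h ∈ A := by
      refine ⟨(fun y : X => h • y) ⁻¹' (interior {y : X | g • y = y}),
        isOpen_interior.preimage (hcont h), hy_mem, ?_⟩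
      intro y hy
      have h2 : h • y ∈ {y : X | g • y = y} := interior_subset hy
      show (h⁻¹ * g * h) • y = y
      rw [mul_smul, mul_smul, show g • (h • y) = h • y from h2, inv_smul_smul]
    have := Subgroup.normalClosure_normal.conj_mem _ (Subgroup.subset_normalClosure hA) h
    simpa [mul_assoc] using this
end

section
/- Let Γ act on a compact Hausdorff space X by an extreme boundary action with more than two points. If U and V are two non-empty open subsets of X neither of which is dense, then the fixator subgroup Γ_V is contained in a conjugate of Γ_U; consequently the normal closures of Γ_U and Γ_V in Γ coincide, and Γ_U is amenable (respectively trivial) if and only if Γ_V is amenable (respectively trivial). -/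
/-- A discrete group is amenable if there is a left-invariant, finitely additive
probability measure defined on all subsets of the group. -/
def IsAmenable (G : Type*) [Group G] : Prop :=
  ∃ μ : Set G → ℝ, (∀ A : Set G, 0 ≤ μ A) ∧ μ Set.univ = 1 ∧
    (∀ A B : Set G, Disjoint A B → μ (A ∪ B) = μ A + μ B) ∧
    (∀ (g : G) (A : Set G), μ ((g * ·) '' A) = μ A)

/-- Amenability transfers along group isomorphisms. -/
lemma isAmenable_of_mulEquiv {G H : Type*} [Group G] [Group H] (e : G ≃* H)
    (hG : IsAmenable G) : IsAmenable H := by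
  obtain ⟨μ, hpos, huniv, hadd, hinv⟩ := hG
  refine ⟨fun A => μ (e.symm '' A), fun A => hpos _, ?_, ?_, ?_⟩
  · dsimp only
    rw [Set.image_univ, e.symm.surjective.range_eq, huniv]
  · intro A B hAB
    dsimp only
    rw [Set.image_union]
    exact hadd _ _ (Set.disjoint_image_of_injective e.symm.injective hAB)
  · intro h A
    have key : e.symm '' ((h * ·) '' A) = (e.symm h * ·) '' (e.symm '' A) := by
      rw [← Set.image_comp, ← Set.image_comp]
      apply Set.image_congr
      intro a _
      simp [map_mul]
    dsimp only
    rw [key, hinv]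

/-- Any subgroup of an amenable group is amenable. -/
lemma isAmenable_subgroup {G : Type*} [Group G] (H : Subgroup G) (hG : IsAmenable G) :
    IsAmenable H := by
  obtain ⟨μ, hpos, huniv, hadd, hinv⟩ := hG
  -- representative of the right coset of `g`
  let r : G → G := fun g => (Quotient.mk (QuotientGroup.rightRel H) g).out
  have hr : ∀ g : G, g * (r g)⁻¹ ∈ H := by
    intro g
    have h1 : (QuotientGroup.rightRel H) (r g) g :=
      Quotient.exact (Quotient.out_eq _)
    exact QuotientGroup.rightRel_apply.mp h1
  have hrmul : ∀ (h : H) (g : G), r ((h : G) * g) = r g := by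
    intro h g
    have : Quotient.mk (QuotientGroup.rightRel H) ((h : G) * g)
        = Quotient.mk (QuotientGroup.rightRel H) g := by
      apply Quotient.sound
      refine QuotientGroup.rightRel_apply.mpr ?_
      have : g * ((h : G) * g)⁻¹ = (h : G)⁻¹ := by group
      rw [this]
      exact H.inv_mem h.2
    simp only [r, this]
  let Φ : G → H := fun g => ⟨g * (r g)⁻¹, hr g⟩
  have hΦ : ∀ (h : H) (g : G), Φ ((h : G) * g) = h * Φ g := by
    intro h g
    ext
    show ((h : G) * g) * (r ((h : G) * g))⁻¹ = (h : G) * (g * (r g)⁻¹)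
    rw [hrmul h g]; group
  refine ⟨fun A => μ (Φ ⁻¹' A), fun A => hpos _, by simpa using huniv, ?_, ?_⟩
  · intro A B hAB
    dsimp only
    rw [Set.preimage_union]
    exact hadd _ _ (Disjoint.preimage Φ hAB)
  · intro h A
    have key : Φ ⁻¹' ((h * ·) '' A) = ((h : G) * ·) '' (Φ ⁻¹' A) := by
      ext x
      constructor
      · rintro ⟨a, ha, hax⟩
        have hx : Φ (((h⁻¹ : H) : G) * x) = a := by
          rw [hΦ h⁻¹ x, ← hax]; group
        refine ⟨((h⁻¹ : H) : G) * x, by rw [Set.mem_preimage, hx]; exact ha, ?_⟩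
        show (h : G) * (((h⁻¹ : H) : G) * x) = x
        push_cast
        group
      · rintro ⟨y, hy, rfl⟩
        exact ⟨Φ y, hy, (hΦ h y).symm⟩
    dsimp only
    rw [key, hinv]

/-- Amenability passes to smaller subgroups. -/
lemma isAmenable_of_le {G : Type*} [Group G] {H K : Subgroup G} (hle : H ≤ K)
    (hK : IsAmenable K) : IsAmenable H :=
  isAmenable_of_mulEquiv (Subgroup.subgroupOfEquivOfLe hle)
    (isAmenable_subgroup (H.subgroupOf K) hK)

/-- For an extreme boundary action of `Γ` on a compact Hausdorff space `X`
with more than two points, and `U`, `V` non-empty open non-dense subsets, the fixator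
`Γ_V` is contained in a conjugate of `Γ_U`; consequently the normal closures of `Γ_U`
and `Γ_V` coincide, and `Γ_U` is amenable (resp. trivial) iff `Γ_V` is. -/
theorem stmt_4 {Γ X : Type*} [Group Γ] [TopologicalSpace X] [CompactSpace X] [T2Space X]
    [MulAction Γ X] (hcont : ∀ g : Γ, Continuous (fun x : X => g • x))
    (hcard : ∃ a b c : X, a ≠ b ∧ a ≠ c ∧ b ≠ c)
    (heba : ∀ K : Set X, IsClosed K → K ≠ Set.univ → ∀ W : Set X, IsOpen W → W.Nonempty →
      ∃ g : Γ, (fun x : X => g • x) '' K ⊆ W)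
    (U V : Set X) (hUo : IsOpen U) (hUne : U.Nonempty) (hUnd : ¬ Dense U)
    (hVo : IsOpen V) (hVne : V.Nonempty) (hVnd : ¬ Dense V) :
    (∃ g : Γ, Subgroup.closure {h : Γ | ∀ x ∈ V, h • x = x} ≤
        (Subgroup.closure {h : Γ | ∀ x ∈ U, h • x = x}).map (MulAut.conj g).toMonoidHom) ∧
    Subgroup.normalClosure {h : Γ | ∀ x ∈ U, h • x = x}
      = Subgroup.normalClosure {h : Γ | ∀ x ∈ V, h • x = x} ∧
    (IsAmenable (Subgroup.closure {h : Γ | ∀ x ∈ U, h • x = x}) ↔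
      IsAmenable (Subgroup.closure {h : Γ | ∀ x ∈ V, h • x = x})) ∧
    ((∀ h : Γ, (∀ x ∈ U, h • x = x) → h = 1) ↔ (∀ h : Γ, (∀ x ∈ V, h • x = x) → h = 1)) := by
  -- For any pair (A, B) of nonempty open non-dense sets, find g with g • A ⊆ B.
  have key : ∀ A B : Set X, ¬ Dense A → IsOpen B → B.Nonempty →
      ∃ g : Γ, ∀ x ∈ A, g • x ∈ B := by
    intro A B hAnd hBo hBne
    have hAcl : closure A ≠ Set.univ := by
      intro hc
      exact hAnd (by rw [Dense]; intro x; rw [hc]; trivial)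
    obtain ⟨g, hg⟩ := heba (closure A) isClosed_closure hAcl B hBo hBne
    exact ⟨g, fun x hx => hg ⟨x, subset_closure hx, rfl⟩⟩
  obtain ⟨g, hg⟩ := key U V hUnd hVo hVne   -- g • U ⊆ V
  obtain ⟨g', hg'⟩ := key V U hVnd hUo hUne -- g' • V ⊆ U
  -- If h fixes V pointwise then g⁻¹ h g fixes U pointwise.
  have conjfix : ∀ h : Γ, (∀ x ∈ V, h • x = x) → ∀ x ∈ U, (g⁻¹ * h * g) • x = x := by
    intro h hh x hx
    have h1 : h • (g • x) = g • x := hh _ (hg x hx)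
    calc (g⁻¹ * h * g) • x = g⁻¹ • h • g • x := by rw [mul_smul, mul_smul]
      _ = g⁻¹ • g • x := by rw [h1]
      _ = x := inv_smul_smul g x
  have conjfix' : ∀ h : Γ, (∀ x ∈ U, h • x = x) → ∀ x ∈ V, (g'⁻¹ * h * g') • x = x := by
    intro h hh x hx
    have h1 : h • (g' • x) = g' • x := hh _ (hg' x hx)
    calc (g'⁻¹ * h * g') • x = g'⁻¹ • h • g' • x := by rw [mul_smul, mul_smul]
      _ = g'⁻¹ • g' • x := by rw [h1]
      _ = x := inv_smul_smul g' x
  -- Part 1: containment in a conjugate.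
  have part1 : ∀ (g₀ : Γ) (A B : Set X),
      (∀ h : Γ, (∀ x ∈ B, h • x = x) → ∀ x ∈ A, (g₀⁻¹ * h * g₀) • x = x) →
      Subgroup.closure {h : Γ | ∀ x ∈ B, h • x = x} ≤
        (Subgroup.closure {h : Γ | ∀ x ∈ A, h • x = x}).map (MulAut.conj g₀).toMonoidHom := by
    intro g₀ A B hfix
    rw [Subgroup.closure_le]
    intro h hh
    refine ⟨g₀⁻¹ * h * g₀, Subgroup.subset_closure (hfix h hh), ?_⟩
    simp [MulAut.conj_apply]
    group
  -- Part 2: normal closures coincide.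
  have ncle : ∀ (g₀ : Γ) (A B : Set X),
      (∀ h : Γ, (∀ x ∈ B, h • x = x) → ∀ x ∈ A, (g₀⁻¹ * h * g₀) • x = x) →
      Subgroup.normalClosure {h : Γ | ∀ x ∈ B, h • x = x} ≤
        Subgroup.normalClosure {h : Γ | ∀ x ∈ A, h • x = x} := by
    intro g₀ A B hfix
    apply Subgroup.normalClosure_le_normal
    intro h hh
    have h1 : g₀⁻¹ * h * g₀ ∈ Subgroup.normalClosure {h : Γ | ∀ x ∈ A, h • x = x} :=
      Subgroup.subset_normalClosure (hfix h hh)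
    have h2 := (Subgroup.normalClosure_normal
      (s := {h : Γ | ∀ x ∈ A, h • x = x})).conj_mem _ h1 g₀
    have : g₀ * (g₀⁻¹ * h * g₀) * g₀⁻¹ = h := by group
    rwa [this] at h2
  have part2 : Subgroup.normalClosure {h : Γ | ∀ x ∈ U, h • x = x}
      = Subgroup.normalClosure {h : Γ | ∀ x ∈ V, h • x = x} :=
    le_antisymm (ncle g' V U conjfix') (ncle g U V conjfix)
  -- Part 3: amenability transfer.
  have amen : ∀ (g₀ : Γ) (A B : Set X),
      (Subgroup.closure {h : Γ | ∀ x ∈ B, h • x = x} ≤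
        (Subgroup.closure {h : Γ | ∀ x ∈ A, h • x = x}).map (MulAut.conj g₀).toMonoidHom) →
      IsAmenable (Subgroup.closure {h : Γ | ∀ x ∈ A, h • x = x}) →
      IsAmenable (Subgroup.closure {h : Γ | ∀ x ∈ B, h • x = x}) := by
    intro g₀ A B hle hA
    refine isAmenable_of_le hle ?_
    exact isAmenable_of_mulEquiv
      ((MulAut.conj g₀).subgroupMap (Subgroup.closure {h : Γ | ∀ x ∈ A, h • x = x})) hA
  refine ⟨⟨g, part1 g U V conjfix⟩, part2, ?_, ?_⟩
  · exact ⟨amen g U V (part1 g U V conjfix), amen g' V U (part1 g' V U conjfix')⟩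
  · constructor
    · intro hU h hh
      have := hU _ (conjfix h hh)
      have : h = g * (g⁻¹ * h * g) * g⁻¹ := by group
      rw [this]
      rw [hU _ (conjfix h hh)]
      group
    · intro hV h hh
      have : h = g' * (g'⁻¹ * h * g') * g'⁻¹ := by group
      rw [this, hV _ (conjfix' h hh)]
      group
end

section
/- Let Γ act by an extreme boundary action on a compact Hausdorff space X, and let U ⊆ X be non-empty open and not dense. Then the normal closure of Γ_U in Γ equals the subgroup int(Γ ↷ X) generated by all elements whose fixed-point set has non-empty interior. -/
/-- For an extreme boundary action of `Γ` on a compact Hausdorff space `X`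
and a non-empty open non-dense `U ⊆ X`, the normal closure of the fixator `Γ_U` equals
the subgroup `int(Γ ↷ X)` generated by all elements whose fixed-point set has non-empty
interior. -/
theorem stmt_5 {Γ X : Type*} [Group Γ] [TopologicalSpace X] [CompactSpace X] [T2Space X]
    [MulAction Γ X] (hcont : ∀ g : Γ, Continuous (fun x : X => g • x))
    (hcard : ∃ a b c : X, a ≠ b ∧ a ≠ c ∧ b ≠ c)
    (heba : ∀ K : Set X, IsClosed K → K ≠ Set.univ → ∀ W : Set X, IsOpen W → W.Nonempty →
      ∃ g : Γ, (fun x : X => g • x) '' K ⊆ W)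
    (U : Set X) (hUo : IsOpen U) (hUne : U.Nonempty) (hUnd : ¬ Dense U) :
    Subgroup.normalClosure {h : Γ | ∀ x ∈ U, h • x = x}
      = Subgroup.closure {g : Γ | (interior {y : X | g • y = y}).Nonempty} := by
  set S : Set Γ := {g : Γ | (interior {y : X | g • y = y}).Nonempty} with hSdef
  -- S is conjugation invariant
  have hconj : ∀ c g : Γ, g ∈ S → c * g * c⁻¹ ∈ S := by
    intro c g hg
    obtain ⟨x, hx⟩ := hg
    have hopen : IsOpen ((fun y : X => c⁻¹ • y) ⁻¹' interior {y : X | g • y = y}) :=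
      isOpen_interior.preimage (hcont c⁻¹)
    have hsub : ((fun y : X => c⁻¹ • y) ⁻¹' interior {y : X | g • y = y})
        ⊆ {y : X | (c * g * c⁻¹) • y = y} := by
      intro y hy
      have h1' : c⁻¹ • y ∈ {y : X | g • y = y} := interior_subset hy
      have h1 : g • (c⁻¹ • y) = c⁻¹ • y := h1'
      simp only [Set.mem_setOf_eq, mul_smul, h1, smul_inv_smul]
    have hmem : c • x ∈ (fun y : X => c⁻¹ • y) ⁻¹' interior {y : X | g • y = y} := by
      simpa [Set.mem_preimage, inv_smul_smul] using hx
    exact ⟨c • x, interior_maximal hsub hopen hmem⟩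
  have hnormal : (Subgroup.closure S).Normal := by
    constructor
    intro n hn c
    have hmap : Subgroup.map (MulAut.conj c).toMonoidHom (Subgroup.closure S)
        ≤ Subgroup.closure S := by
      rw [MonoidHom.map_closure]
      apply Subgroup.closure_mono
      rintro _ ⟨g, hg, rfl⟩
      simpa using hconj c g hg
    have : (MulAut.conj c).toMonoidHom n ∈ Subgroup.closure S := hmap ⟨n, hn, rfl⟩
    simpa using this
  haveI := hnormal
  apply le_antisymm
  · -- normalClosure Γ_U ≤ closure S
    apply Subgroup.normalClosure_le_normal
    intro h hh
    apply Subgroup.subset_closure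
    obtain ⟨x, hx⟩ := hUne
    have hUsub : U ⊆ {y : X | h • y = y} := fun y hy => hh y hy
    exact ⟨x, interior_maximal hUsub hUo hx⟩
  · -- closure S ≤ normalClosure Γ_U
    rw [Subgroup.closure_le]
    intro g hg
    obtain ⟨x0, hx0⟩ := hg
    have hKne : closure U ≠ Set.univ := by
      intro h
      exact hUnd (dense_iff_closure_eq.mpr h)
    obtain ⟨t, ht⟩ := heba (closure U) isClosed_closure hKne
      (interior {y : X | g • y = y}) isOpen_interior ⟨x0, hx0⟩
    have hmem : t⁻¹ * g * t ∈ {h : Γ | ∀ x ∈ U, h • x = x} := by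
      intro x hx
      have h1' : t • x ∈ {y : X | g • y = y} :=
        interior_subset (ht ⟨x, subset_closure hx, rfl⟩)
      have h1 : g • (t • x) = t • x := h1'
      simp only [mul_smul, h1, inv_smul_smul]
    have h2 : t⁻¹ * g * t ∈ Subgroup.normalClosure {h : Γ | ∀ x ∈ U, h • x = x} :=
      Subgroup.subset_normalClosure hmem
    have h3 := Subgroup.normalClosure_normal.conj_mem _ h2 t
    have h4 : t * (t⁻¹ * g * t) * t⁻¹ = g := by group
    rwa [h4] at h3
end

section
/- Let T be a tree and let e, e′ be edges. If Z_B(e) ∩ Z_B(e′) is non-empty, then Z_0(e) ∩ Z_0(e′) is infinite. -/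
namespace TreeStmt

variable {V : Type*} (G : SimpleGraph V)

/-- A ray in a graph: a sequence of vertices with `d(r_i, r_{i+n}) = n`. -/
def IsRay (r : ℕ → V) : Prop := ∀ i n : ℕ, G.dist (r i) (r (i + n)) = n

/-- Two rays are cofinal if they eventually agree after shifts. -/
def Cofinal (r s : ℕ → V) : Prop := ∃ k n : ℕ, ∀ i : ℕ, r (i + k) = s (i + n)

/-- A ray passes through the (oriented) edge `(u, v)`. -/
def Through (r : ℕ → V) (u v : V) : Prop := ∃ j : ℕ, r j = u ∧ r (j + 1) = v

/-- The cofinality class of the ray `r` belongs to the boundary shadow `Z_B(u,v)`: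
some ray cofinal to `r` passes through the edge `(u, v)`. -/
def InZB (r : ℕ → V) (u v : V) : Prop :=
  ∃ s : ℕ → V, IsRay G s ∧ Cofinal r s ∧ Through s u v

/-- The shadow of an edge `(u, v)`: vertices strictly closer to `v` than to `u`. -/
def Z0 (u v : V) : Set V := {w : V | G.dist w v < G.dist w u}

end TreeStmt

open TreeStmt

lemma ray_dist {V : Type*} (G : SimpleGraph V) {s : ℕ → V} (hs : IsRay G s)
    {i j : ℕ} (hij : i ≤ j) : G.dist (s i) (s j) = j - i := by
  have := hs i (j - i)
  rwa [Nat.add_sub_cancel' hij] at this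

lemma ray_mem_Z0 {V : Type*} (G : SimpleGraph V) {s : ℕ → V} (hs : IsRay G s)
    {u v : V} {j m : ℕ} (hu : s j = u) (hv : s (j + 1) = v) (hm : j + 1 ≤ m) :
    s m ∈ Z0 G u v := by
  have h1 : G.dist (s j) (s m) = m - j := ray_dist G hs (by omega)
  have h2 : G.dist (s (j + 1)) (s m) = m - (j + 1) := ray_dist G hs hm
  simp only [Z0, Set.mem_setOf_eq]
  have c1 : G.dist (s m) (s j) = m - j := by rw [SimpleGraph.dist_comm]; exact h1
  have c2 : G.dist (s m) (s (j + 1)) = m - (j + 1) := by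
    rw [SimpleGraph.dist_comm]; exact h2
  rw [← hu, ← hv, c1, c2]
  omega

/-- In a tree, if `Z_B(e) ∩ Z_B(e′)` is non-empty
(some ray's class lies in both boundary shadows), then `Z_0(e) ∩ Z_0(e′)` is infinite. -/
theorem stmt_7 {V : Type*} (G : SimpleGraph V) (hT : G.IsTree)
    (u₁ v₁ u₂ v₂ : V) (h₁ : G.Adj u₁ v₁) (h₂ : G.Adj u₂ v₂)
    (h : ∃ r : ℕ → V, IsRay G r ∧ InZB G r u₁ v₁ ∧ InZB G r u₂ v₂) :
    (Z0 G u₁ v₁ ∩ Z0 G u₂ v₂).Infinite := by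
  obtain ⟨r, hr, ⟨s₁, hs₁, ⟨k₁, n₁, hc₁⟩, j₁, hj₁u, hj₁v⟩,
    ⟨s₂, hs₂, ⟨k₂, n₂, hc₂⟩, j₂, hj₂u, hj₂v⟩⟩ := h
  -- s₁ (i + k₂ + n₁) = r (i + k₂ + k₁) = s₂ (i + k₁ + n₂)
  have key : ∀ i, s₁ (i + (k₂ + n₁)) = s₂ (i + (k₁ + n₂)) := by
    intro i
    calc s₁ (i + (k₂ + n₁)) = r (i + k₂ + k₁) := by
          rw [show i + (k₂ + n₁) = i + k₂ + n₁ by ring]; exact (hc₁ (i + k₂)).symm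
      _ = s₂ (i + (k₁ + n₂)) := by
          rw [show i + k₂ + k₁ = i + k₁ + k₂ by ring, hc₂ (i + k₁),
            show i + k₁ + n₂ = i + (k₁ + n₂) by ring]
  set M := k₂ + n₁ + j₁ + j₂ + 1 with hM
  apply Set.infinite_of_injective_forall_mem
    (f := fun i : ℕ => s₁ (i + M))
  · intro a b hab
    by_contra hne
    wlog hlt : a < b generalizing a b
    · exact this hab.symm (Ne.symm hne) (by omega)
    simp only [] at hab
    have := ray_dist G hs₁ (show a + M ≤ b + M by omega)
    rw [hab] at this
    simp [SimpleGraph.dist_self] at this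
    omega
  · intro i
    constructor
    · exact ray_mem_Z0 G hs₁ hj₁u hj₁v (by omega)
    · have hk : i + M = (i + j₁ + j₂ + 1) + (k₂ + n₁) := by omega
      rw [hk, key]
      exact ray_mem_Z0 G hs₂ hj₂u hj₂v (by omega)
end

section
/- Let T be a tree and let e, e′ be edges with d(r(e), r(e′)) > d(s(e), s(e′)). Then the extended shadows Z(e) and Z(e′) are disjoint; in particular Z_0(e) ∩ Z_0(e′) = ∅. -/
namespace TreeStmt

variable {V : Type*} (G : SimpleGraph V)

/-- The boundary `∂T`: cofinality classes of rays. -/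
def Boundary : Type _ := Quot (fun r s : {r : ℕ → V // IsRay G r} => Cofinal r.1 s.1)

/-- The boundary shadow `Z_B(u,v)` as a subset of `∂T`. -/
def ZB (u v : V) : Set (Boundary G) :=
  {x : Boundary G | ∃ r : {r : ℕ → V // IsRay G r}, x = Quot.mk _ r ∧ InZB G r.1 u v}

/-- The extended space `T ∪ ∂T`. -/
def Ext : Type _ := V ⊕ Boundary G

/-- The extended shadow `Z(u,v) = Z_0(u,v) ∪ Z_B(u,v)` inside `T ∪ ∂T`. -/
def Z (u v : V) : Set (Ext G) :=
  Sum.inl '' Z0 G u v ∪ Sum.inr '' ZB G u v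

/-- The shadow topology on `T ∪ ∂T`, generated by the extended shadows. -/
def shadowTopology : TopologicalSpace (Ext G) :=
  TopologicalSpace.generateFrom {S : Set (Ext G) | ∃ u v : V, G.Adj u v ∧ S = Z G u v}

end TreeStmt

open TreeStmt

/-!
Write `e = (s, r)` and `e′ = (s′, r′)`. In a tree, a vertex `w ∈ Z₀(e)` and a vertex `x` on the
`s`-side of `e` are joined by a geodesic through `e`, so `d(w, x) = d(w, r) + 1 + d(s, x)`.
The triangle inequality and `d(s, s′) < d(r, r′)` put both `s′` and `r′` on the `s`-side of `e`,
hence for `w ∈ Z₀(e)` we get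
`d(w, r′) - d(w, s′) = d(s, r′) - d(s, s′) = d(r, r′) - 1 - d(s, s′) ≥ 0`, i.e. `w ∉ Z₀(e′)`.
Boundary points reduce to vertices: a ray through an edge eventually stays in its shadow, and
cofinal rays share their tails, so a common point of `Z_B(e)` and `Z_B(e′)` would give a common
vertex of `Z₀(e)` and `Z₀(e′)`.
-/

namespace SimpleGraph

variable {V : Type*} {G : SimpleGraph V}

lemma Walk.dist_add_dist_of_mem_support {a b y : V} (p : G.Walk a b)
    (hp : p.length = G.dist a b) (hy : y ∈ p.support) :
    G.dist a y + G.dist y b = G.dist a b := by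
  classical
  have hsplit : (p.takeUntil y hy).length + (p.dropUntil y hy).length = p.length := by
    rw [← Walk.length_append, p.take_spec hy]
  have h₁ : G.dist a y ≤ (p.takeUntil y hy).length := dist_le _
  have h₂ : G.dist y b ≤ (p.dropUntil y hy).length := dist_le _
  have h₃ : G.dist a b ≤ G.dist a y + G.dist y b :=
    (p.takeUntil y hy).reachable.dist_triangle_left b
  omega

lemma IsAcyclic.length_eq_dist_of_isPath (hG : G.IsAcyclic) {a b : V} {p : G.Walk a b}
    (hp : p.IsPath) : p.length = G.dist a b := by
  obtain ⟨q, hq, hq_len⟩ := p.reachable.exists_path_of_dist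
  obtain rfl : p = q := congrArg Subtype.val ((hG.subsingleton_path a b).elim ⟨p, hp⟩ ⟨q, hq⟩)
  exact hq_len

lemma Walk.mem_Z0_of_mem_support {u v w y : V} (hw : w ∈ Z0 G u v) (p : G.Walk w v)
    (hp : p.length = G.dist w v) (hy : y ∈ p.support) : y ∈ Z0 G u v := by
  classical
  have hsplit := p.dist_add_dist_of_mem_support hp hy
  have htri : G.dist w u ≤ G.dist w y + G.dist y u :=
    (p.takeUntil y hy).reachable.dist_triangle_left u
  change G.dist w v < G.dist w u at hw
  change G.dist y v < G.dist y u
  omega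

lemma IsTree.dist_eq_add_one_of_mem_Z0 (hT : G.IsTree) {u v w : V} (h : G.Adj u v)
    (hw : w ∈ Z0 G u v) : G.dist w u = G.dist w v + 1 := by
  have hw : G.dist w v < G.dist w u := hw
  rcases hT.dist_eq_dist_add_one_of_adj w h with h' | h' <;> omega

lemma IsTree.mem_Z0_of_notMem_Z0 (hT : G.IsTree) {u v x : V} (h : G.Adj u v)
    (hx : x ∉ Z0 G u v) : x ∈ Z0 G v u := by
  have hx : ¬ G.dist x v < G.dist x u := hx
  have hne := hT.dist_ne_of_adj x h
  change G.dist x u < G.dist x v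
  omega

/-- Geodesic `w ⋯ v`, edge `v u`, geodesic `u ⋯ x` form a path, since the two geodesics lie in
the disjoint shadows `Z0 G u v` and `Z0 G v u`; in a tree every path is a geodesic. -/
lemma IsTree.dist_eq_of_mem_Z0_of_mem_Z0 (hT : G.IsTree) {u v w x : V} (h : G.Adj u v)
    (hw : w ∈ Z0 G u v) (hx : x ∈ Z0 G v u) :
    G.dist w x = G.dist w v + 1 + G.dist u x := by
  obtain ⟨p, -, hp⟩ := hT.connected.exists_path_of_dist w v
  obtain ⟨q, -, hq⟩ := hT.connected.exists_path_of_dist u x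
  have hq' : q.reverse.length = G.dist x u := by rw [Walk.length_reverse, hq, dist_comm]
  have hpq : (p.append (Walk.cons h.symm q)).IsPath := by
    rw [Walk.isPath_def, Walk.support_append, Walk.support_cons, List.tail_cons,
      List.nodup_append]
    refine ⟨(p.isPath_of_length_eq_dist hp).support_nodup,
      (q.isPath_of_length_eq_dist hq).support_nodup, fun y hyp z hzq hyz => ?_⟩
    have hyv : G.dist y v < G.dist y u := p.mem_Z0_of_mem_support hw hp hyp
    have hzu : G.dist z u < G.dist z v :=
      q.reverse.mem_Z0_of_mem_support hx hq' (q.support_reverse ▸ List.mem_reverse.mpr hzq)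
    subst hyz
    omega
  have hlen := hT.isAcyclic.length_eq_dist_of_isPath hpq
  rw [Walk.length_append, Walk.length_cons, hp, hq] at hlen
  omega

lemma Connected.notMem_Z0_of_dist_lt_dist (hG : G.Connected) {u₁ v₁ u₂ v₂ : V}
    (h₂ : G.Adj u₂ v₂) (hd : G.dist u₁ u₂ < G.dist v₁ v₂) :
    u₂ ∉ Z0 G u₁ v₁ ∧ v₂ ∉ Z0 G u₁ v₁ := by
  have hu₂v₂ : G.dist u₂ v₂ = 1 := dist_eq_one_iff_adj.mpr h₂
  have hv₂u₂ : G.dist v₂ u₂ = 1 := dist_eq_one_iff_adj.mpr h₂.symm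
  have t₁ : G.dist v₁ v₂ ≤ G.dist v₁ u₂ + G.dist u₂ v₂ := hG.dist_triangle
  have t₂ : G.dist v₂ u₁ ≤ G.dist v₂ u₂ + G.dist u₂ u₁ := hG.dist_triangle
  have c₁ : G.dist u₂ u₁ = G.dist u₁ u₂ := dist_comm
  have c₂ : G.dist u₂ v₁ = G.dist v₁ u₂ := dist_comm
  have c₃ : G.dist v₂ v₁ = G.dist v₁ v₂ := dist_comm
  constructor
  · intro (hu : G.dist u₂ v₁ < G.dist u₂ u₁)
    omega
  · intro (hv : G.dist v₂ v₁ < G.dist v₂ u₁)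
    omega

lemma IsTree.Z0_inter_Z0_eq_empty (hT : G.IsTree) {u₁ v₁ u₂ v₂ : V}
    (h₁ : G.Adj u₁ v₁) (h₂ : G.Adj u₂ v₂) (hd : G.dist u₁ u₂ < G.dist v₁ v₂) :
    Z0 G u₁ v₁ ∩ Z0 G u₂ v₂ = ∅ := by
  refine Set.eq_empty_of_forall_notMem fun w ⟨hw₁, (hw₂ : G.dist w v₂ < G.dist w u₂)⟩ => ?_
  obtain ⟨hu₂, hv₂⟩ := hT.connected.notMem_Z0_of_dist_lt_dist h₂ hd
  have hwu₂ := hT.dist_eq_of_mem_Z0_of_mem_Z0 h₁ hw₁ (hT.mem_Z0_of_notMem_Z0 h₁ hu₂)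
  have hwv₂ := hT.dist_eq_of_mem_Z0_of_mem_Z0 h₁ hw₁ (hT.mem_Z0_of_notMem_Z0 h₁ hv₂)
  have hv₂v₁ := hT.dist_eq_add_one_of_mem_Z0 h₁.symm (hT.mem_Z0_of_notMem_Z0 h₁ hv₂)
  have c₁ : G.dist v₂ u₁ = G.dist u₁ v₂ := dist_comm
  have c₂ : G.dist v₂ v₁ = G.dist v₁ v₂ := dist_comm
  omega

end SimpleGraph

namespace TreeStmt

open Filter

variable {V : Type*} {G : SimpleGraph V}

lemma Cofinal.symm {r s : ℕ → V} (h : Cofinal r s) : Cofinal s r := by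
  obtain ⟨k, n, h⟩ := h
  exact ⟨n, k, fun i => (h i).symm⟩

lemma Cofinal.trans {r s t : ℕ → V} (h₁ : Cofinal r s) (h₂ : Cofinal s t) : Cofinal r t := by
  obtain ⟨k, n, h₁⟩ := h₁
  obtain ⟨k', n', h₂⟩ := h₂
  refine ⟨k + k', n + n', fun i => ?_⟩
  calc r (i + (k + k')) = r (i + k' + k) := congrArg r (by omega)
    _ = s (i + k' + n) := h₁ _
    _ = s (i + n + k') := congrArg s (by omega)
    _ = t (i + n + n') := h₂ _
    _ = t (i + (n + n')) := congrArg t (by omega)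

lemma cofinal_equivalence (G : SimpleGraph V) :
    Equivalence (fun r s : {r : ℕ → V // IsRay G r} => Cofinal r.1 s.1) :=
  ⟨fun _ => ⟨0, 0, fun _ => rfl⟩, Cofinal.symm, Cofinal.trans⟩

lemma Cofinal.eventually_mem {r s : ℕ → V} {A : Set V} (h : Cofinal r s)
    (hs : ∀ᶠ m in atTop, s m ∈ A) : ∀ᶠ m in atTop, r m ∈ A := by
  obtain ⟨k, n, h⟩ := h
  obtain ⟨N, hN⟩ := eventually_atTop.mp hs
  refine eventually_atTop.mpr ⟨N + k, fun m hm => ?_⟩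
  obtain ⟨i, rfl⟩ := Nat.exists_eq_add_of_le' (le_of_add_le_right hm)
  exact h i ▸ hN _ (by omega)

lemma IsRay.eventually_mem_Z0 {s : ℕ → V} (hs : IsRay G s) {u v : V} (h : Through s u v) :
    ∀ᶠ m in atTop, s m ∈ Z0 G u v := by
  obtain ⟨j, rfl, rfl⟩ := h
  refine eventually_atTop.mpr ⟨j + 1, fun m hm => ?_⟩
  obtain ⟨i, rfl⟩ := Nat.exists_eq_add_of_le hm
  have hj := hs j (1 + i)
  have hj₁ := hs (j + 1) i
  rw [← add_assoc] at hj
  change G.dist _ _ < G.dist _ _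
  rw [SimpleGraph.dist_comm, hj₁, SimpleGraph.dist_comm, hj]
  omega

lemma InZB.eventually_mem_Z0 {r : ℕ → V} {u v : V} (h : InZB G r u v) :
    ∀ᶠ m in atTop, r m ∈ Z0 G u v := by
  obtain ⟨s, hs, hrs, hsuv⟩ := h
  exact hrs.eventually_mem (hs.eventually_mem_Z0 hsuv)

lemma Z0_inter_nonempty_of_ZB_inter_nonempty {u₁ v₁ u₂ v₂ : V}
    (h : (ZB G u₁ v₁ ∩ ZB G u₂ v₂).Nonempty) :
    (Z0 G u₁ v₁ ∩ Z0 G u₂ v₂).Nonempty := by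
  obtain ⟨x, ⟨r₁, rfl, hr₁⟩, ⟨r₂, hr, hr₂⟩⟩ := h
  have hr₁r₂ : Cofinal r₁.1 r₂.1 :=
    (cofinal_equivalence G).eqvGen_iff.mp (Quot.eqvGen_exact hr)
  obtain ⟨m, hm⟩ :=
    (hr₁.eventually_mem_Z0.and (hr₁r₂.eventually_mem hr₂.eventually_mem_Z0)).exists
  exact ⟨r₁.1 m, hm⟩

lemma disjoint_Z_of_disjoint_Z0 {u₁ v₁ u₂ v₂ : V} (h : Disjoint (Z0 G u₁ v₁) (Z0 G u₂ v₂)) :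
    Disjoint (Z G u₁ v₁) (Z G u₂ v₂) := by
  have hB : Disjoint (ZB G u₁ v₁) (ZB G u₂ v₂) := by
    rw [Set.disjoint_iff_inter_eq_empty, ← Set.not_nonempty_iff_eq_empty] at h ⊢
    exact fun hne => h (Z0_inter_nonempty_of_ZB_inter_nonempty hne)
  rw [Set.disjoint_left]
  rintro _ (⟨w, hw, rfl⟩ | ⟨x, hx, rfl⟩) (⟨w', hw', hww'⟩ | ⟨x', hx', hxx'⟩)
  · exact Set.disjoint_left.mp h hw (Sum.inl_injective hww' ▸ hw')
  · cases hxx'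
  · cases hww'
  · exact Set.disjoint_left.mp hB hx (Sum.inr_injective hxx' ▸ hx')

end TreeStmt

/-- In a tree, if edges `e = (u₁, v₁)` and `e′ = (u₂, v₂)` satisfy
`d(r(e), r(e′)) > d(s(e), s(e′))`, then the extended shadows `Z(e)` and `Z(e′)` are
disjoint; in particular `Z_0(e) ∩ Z_0(e′) = ∅`. -/
theorem stmt_9 {V : Type*} (G : SimpleGraph V) (hT : G.IsTree)
    (u₁ v₁ u₂ v₂ : V) (h₁ : G.Adj u₁ v₁) (h₂ : G.Adj u₂ v₂)
    (hd : G.dist u₁ u₂ < G.dist v₁ v₂) :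
    Disjoint (Z G u₁ v₁) (Z G u₂ v₂) ∧ Z0 G u₁ v₁ ∩ Z0 G u₂ v₂ = ∅ := by
  have hZ0 := hT.Z0_inter_Z0_eq_empty h₁ h₂ hd
  exact ⟨disjoint_Z_of_disjoint_Z0 (Set.disjoint_iff_inter_eq_empty.mpr hZ0), hZ0⟩
end

section
/- Let Γ = HNN(G, H, θ) be a non-ascending HNN extension with quasi-kernels K₋₁ and K₁. For any s ∈ S₋₁ \ {1} (a non-trivial left coset representative of H in G), one has K₁ ⊆ sτ K₋₁ τ⁻¹ s⁻¹; consequently the normal closures of K₋₁ and K₁ in Γ coincide. -/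
namespace HNNStmt

open HNNExtension

variable {G : Type*} [Group G] (A B : Subgroup G) (φ : A ≃* B)

/-- The stable letter `τ` of the paper's convention: `τ⁻¹ h τ = θ(h)` for `h ∈ H = A`,
where `θ = φ`. In Mathlib's `HNNExtension`, `t * of a * t⁻¹ = of (φ a)`, so `τ = t⁻¹`. -/
def τ : HNNExtension G A B φ := (t : HNNExtension G A B φ)⁻¹

/-- `H₋₁ = H = A` and `H₁ = θ(H) = B`. -/
def Hsub (ε : ℤ) : Subgroup G := if ε = 1 then B else A

/-- The word `g₁ τ^{ε₁} g₂ τ^{ε₂} ⋯ g_n τ^{ε_n} g_{n+1}` (zero-based indexing). -/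
def wordProd (gs : ℕ → G) (εs : ℕ → ℤ) (n : ℕ) : HNNExtension G A B φ :=
  ((List.range n).map (fun i => of (gs i) * (τ A B φ) ^ (εs i))).prod * of (gs n)

/-- All exponents are `±1`. -/
def IsSign (εs : ℕ → ℤ) (n : ℕ) : Prop := ∀ i < n, εs i = 1 ∨ εs i = -1

/-- The word `g₁ τ^{ε₁} ⋯ g_n τ^{ε_n} g_{n+1}` is reduced: whenever `ε_{i+1} = -ε_i`,
the letter `g_{i+1} ∉ H_{ε_i}`. -/
def Reduced (gs : ℕ → G) (εs : ℕ → ℤ) (n : ℕ) : Prop :=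
  ∀ i : ℕ, i + 1 < n → εs (i + 1) = -εs i → gs (i + 1) ∉ Hsub A B (εs i)

/-- `T_ε^†`: the set of elements of length `≥ 1`, type `ε`, and initial letter `1`,
described via reduced words: `g` admits a reduced expression with first exponent `ε`
and first letter lying in `H_{-ε}`. -/
def Tdag (ε : ℤ) : Set (HNNExtension G A B φ) :=
  {g | ∃ (n : ℕ) (gs : ℕ → G) (εs : ℕ → ℤ), 1 ≤ n ∧ IsSign εs n ∧
    Reduced A B gs εs n ∧ g = wordProd A B φ gs εs n ∧ εs 0 = ε ∧ gs 0 ∈ Hsub A B (-ε)}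

/-- The quasi-kernel `K_ε = ⋂_{r ∈ Γ \ T_ε^†} r H r⁻¹`. -/
def K (ε : ℤ) : Subgroup (HNNExtension G A B φ) :=
  ⨅ (r : HNNExtension G A B φ) (_ : r ∉ Tdag A B φ ε),
    (A.map (of : G →* HNNExtension G A B φ)).map (MulAut.conj r).toMonoidHom

end HNNStmt

/-!
Let `s ∉ H_{-ε}`. If `s τ^ε r` lay in `T_ε^†`, cancelling `s τ^ε` against a reduced word
`g₁ τ^ε ⋯` for it (with `g₁ ∈ H_{-ε}`) would give the word `1 · τ^{-ε} (s⁻¹ g₁) τ^ε ⋯` for `r`,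
reduced at the junction because `s⁻¹ g₁ ∉ H_{-ε}`; so `r ∈ T_{-ε}^†`. Hence left multiplication
by `s τ^ε` maps `Γ \ T_{-ε}^†` into `Γ \ T_ε^†`, and conjugation by `(s τ^ε)⁻¹` carries `K_ε`
into `K_{-ε}`. As `θ(H) ≠ G`, such an `s` exists for both signs, so `K₁` and `K₋₁` are each
conjugate into the other and have the same normal closure.
-/

namespace HNNStmt

open HNNExtension

variable {G : Type*} [Group G] (A B : Subgroup G) (φ : A ≃* B)

lemma wordProd_succ (gs : ℕ → G) (εs : ℕ → ℤ) (n : ℕ) :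
    wordProd A B φ gs εs (n + 1) =
      of (gs 0) * τ A B φ ^ εs 0 *
        wordProd A B φ (fun i => gs (i + 1)) (fun i => εs (i + 1)) n := by
  unfold wordProd
  rw [List.range_succ_eq_map, List.map_cons, List.prod_cons, List.map_map]
  simp only [Function.comp_def, mul_assoc]

lemma mem_Tdag_neg_of_mul_mem_Tdag {ε : ℤ} (hε : ε = 1 ∨ ε = -1) {s : G}
    (hs : s ∉ Hsub A B (-ε)) {r : HNNExtension G A B φ}
    (hr : of s * τ A B φ ^ ε * r ∈ Tdag A B φ ε) : r ∈ Tdag A B φ (-ε) := by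
  obtain ⟨n, gs, εs, hn, hsign, hred, hprod, hε₀, hg₀⟩ := hr
  obtain ⟨m, rfl⟩ : ∃ m, n = m + 1 := ⟨n - 1, by omega⟩
  set tail := wordProd A B φ (fun i => gs (i + 1)) (fun i => εs (i + 1)) m
  have hsplit : wordProd A B φ gs εs (m + 1) = of (gs 0) * τ A B φ ^ ε * tail := by
    rw [wordProd_succ, hε₀]
  refine ⟨m + 1 + 1, fun | 0 => 1 | 1 => s⁻¹ * gs 0 | i + 2 => gs (i + 1),
    fun | 0 => -ε | i + 1 => εs i, by omega, ?_, ?_, ?_, rfl, one_mem _⟩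
  · rintro (_ | i) hi
    · rcases hε with rfl | rfl <;> simp
    · exact hsign i (by omega)
  · rintro (_ | i) hi hflip
    · intro hmem
      change s⁻¹ * gs 0 ∈ _ at hmem
      exact hs (by simpa using mul_mem hg₀ (inv_mem hmem))
    · exact hred i (by omega) hflip
  · have hr : r = τ A B φ ^ (-ε) * of (s⁻¹ * gs 0) * τ A B φ ^ ε * tail :=
      calc r = (of s * τ A B φ ^ ε)⁻¹ * (of s * τ A B φ ^ ε * r) := by group
        _ = _ := by rw [hprod, hsplit, map_mul, map_inv, zpow_neg]; group
    rw [hr, wordProd_succ, wordProd_succ]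
    change _ = of 1 * τ A B φ ^ (-ε) * (of (s⁻¹ * gs 0) * τ A B φ ^ εs 0 * tail)
    rw [map_one, one_mul, hε₀]
    simp only [mul_assoc]

lemma K_le_map_conj {ε : ℤ} (hε : ε = 1 ∨ ε = -1) {s : G} (hs : s ∉ Hsub A B (-ε)) :
    K A B φ ε ≤ (K A B φ (-ε)).map (MulAut.conj (of s * τ A B φ ^ ε)).toMonoidHom := by
  intro x hx
  rw [Subgroup.mem_map_equiv]
  simp only [K, Subgroup.mem_iInf] at hx ⊢
  intro r hr
  have hx' := hx _ (mt (mem_Tdag_neg_of_mul_mem_Tdag A B φ hε hs) hr)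
  rw [Subgroup.mem_map_equiv] at hx' ⊢
  simpa only [MulAut.conj_symm_apply, mul_inv_rev, mul_assoc] using hx'

end HNNStmt

lemma Subgroup.normalClosure_le_of_le_map_conj {Γ : Type*} [Group Γ] {H L : Subgroup Γ}
    (g : Γ) (h : H ≤ L.map (MulAut.conj g).toMonoidHom) :
    normalClosure (H : Set Γ) ≤ normalClosure (L : Set Γ) :=
  normalClosure_le_normal fun x hx => by
    obtain ⟨y, hy, rfl⟩ := h hx
    exact normalClosure_normal.conj_mem y (subset_normalClosure hy) g

open HNNExtension HNNStmt

theorem stmt_11_general {G : Type*} [Group G] (A B : Subgroup G) (φ : A ≃* B)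
    (hB : B ≠ ⊤) (s : G) (hs : s ∉ A) :
    K A B φ 1 ≤ (K A B φ (-1)).map
        (MulAut.conj (of s * τ A B φ)).toMonoidHom ∧
    Subgroup.normalClosure (K A B φ (-1) : Set (HNNExtension G A B φ))
      = Subgroup.normalClosure (K A B φ 1 : Set (HNNExtension G A B φ)) := by
  have hK_one : K A B φ 1 ≤ (K A B φ (-1)).map (MulAut.conj (of s * τ A B φ)).toMonoidHom := by
    simpa using K_le_map_conj A B φ (Or.inl rfl) (s := s) (by simpa [Hsub] using hs)
  obtain ⟨s', hs'⟩ : ∃ s', s' ∉ B := by simpa [Subgroup.eq_top_iff'] using hB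
  have hK_neg_one := K_le_map_conj A B φ (Or.inr rfl) (s := s') (by simpa [Hsub] using hs')
  exact ⟨hK_one, le_antisymm (Subgroup.normalClosure_le_of_le_map_conj _ hK_neg_one)
    (Subgroup.normalClosure_le_of_le_map_conj _ hK_one)⟩

/-- For a non-ascending HNN extension `Γ = HNN(G, H, θ)` with quasi-kernels
`K₋₁`, `K₁`, and any non-trivial left coset representative `s` of `H = A` in `G`
(i.e. `s ∉ H`), one has `K₁ ⊆ sτ K₋₁ τ⁻¹ s⁻¹`; consequently the normal closures of
`K₋₁` and `K₁` coincide. -/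
theorem stmt_11 {G : Type*} [Group G] (A B : Subgroup G) (φ : A ≃* B)
    (hA : A ≠ ⊤) (hB : B ≠ ⊤) (s : G) (hs : s ∉ A) :
    K A B φ 1 ≤ (K A B φ (-1)).map
        (MulAut.conj (of s * τ A B φ)).toMonoidHom ∧
    Subgroup.normalClosure (K A B φ (-1) : Set (HNNExtension G A B φ))
      = Subgroup.normalClosure (K A B φ 1 : Set (HNNExtension G A B φ)) :=
  stmt_11_general A B φ hB s hs
end

section
/- Britton's lemma: in an HNN extension Γ = HNN(G, H, θ), any reduced word g₁τ^{ε₁}g₂τ^{ε₂}⋯g_nτ^{ε_n}g_{n+1} with n ≥ 1 represents a non-identity element of Γ; in particular such an element does not lie in (the image of) G. -/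
/-!
Translate the word into Mathlib's `HNNExtension.NormalWord.ReducedWord`: since `τ = t⁻¹`, the
letter `τ ^ ε` becomes `t ^ (-ε)`, and the reducedness condition on `gᵢ₊₁` becomes exactly the
chain condition of a reduced word. Mathlib's form of Britton's lemma says that a reduced word
whose product lies in `G` has no letters `t`, which is impossible when `n ≥ 1`.
-/

theorem List.prod_range_map_mul_mul_eq {M : Type*} [Monoid M] (a b : ℕ → M) (n : ℕ) :
    ((List.range n).map fun i => a i * b i).prod * a n =
      a 0 * ((List.range n).map fun i => b i * a (i + 1)).prod := by
  induction n with
  | zero => simp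
  | succ n ih =>
    simp only [List.range_succ, List.map_append, List.prod_append, List.map_singleton,
      List.prod_singleton, ← mul_assoc, ← ih]

namespace HNNStmt

open HNNExtension NormalWord

def stableExponent (ε : ℤ) : ℤˣ := if ε = 1 then -1 else 1

theorem coe_stableExponent {ε : ℤ} (hε : ε = 1 ∨ ε = -1) : (stableExponent ε : ℤ) = -ε := by
  rcases hε with rfl | rfl <;> simp [stableExponent]

theorem eq_neg_of_stableExponent_ne {ε ε' : ℤ} (hε : ε = 1 ∨ ε = -1) (hε' : ε' = 1 ∨ ε' = -1)
    (h : stableExponent ε ≠ stableExponent ε') : ε' = -ε := by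
  rcases hε with rfl | rfl <;> rcases hε' with rfl | rfl <;> simp_all

variable {G : Type*} [Group G] {A B : Subgroup G} (φ : A ≃* B)

theorem toSubgroup_stableExponent (ε : ℤ) : toSubgroup A B (stableExponent ε) = Hsub A B ε := by
  unfold stableExponent Hsub
  split_ifs <;> rfl

theorem τ_zpow {ε : ℤ} (hε : ε = 1 ∨ ε = -1) : τ A B φ ^ ε = t ^ (stableExponent ε : ℤ) := by
  rw [coe_stableExponent hε, τ, inv_zpow, zpow_neg]

theorem wordProd_eq_of_mul_prod {gs : ℕ → G} {εs : ℕ → ℤ} {n : ℕ} (hsign : IsSign εs n) :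
    wordProd A B φ gs εs n =
      of (gs 0) * ((List.range n).map fun i => t ^ (stableExponent (εs i) : ℤ) *
        of (gs (i + 1))).prod := by
  rw [wordProd, List.prod_range_map_mul_mul_eq]
  congr 2
  refine List.map_congr_left fun i hi => ?_
  rw [τ_zpow φ (hsign i (List.mem_range.mp hi))]

def toReducedWord (gs : ℕ → G) (εs : ℕ → ℤ) (n : ℕ) (hsign : IsSign εs n)
    (hred : Reduced A B gs εs n) : ReducedWord G A B where
  head := gs 0
  toList := (List.range n).map fun i => (stableExponent (εs i), gs (i + 1))
  chain := by
    rw [List.isChain_map, List.isChain_range]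
    intro i hi hmem
    by_contra hne
    have hi' : i + 1 < n := by omega
    refine hred i hi' (eq_neg_of_stableExponent_ne (hsign i (by omega)) (hsign (i + 1) hi') hne) ?_
    rwa [← toSubgroup_stableExponent]

theorem prod_toReducedWord {gs : ℕ → G} {εs : ℕ → ℤ} {n : ℕ} (hsign : IsSign εs n)
    (hred : Reduced A B gs εs n) :
    (toReducedWord gs εs n hsign hred).prod φ = wordProd A B φ gs εs n := by
  rw [wordProd_eq_of_mul_prod φ hsign, ReducedWord.prod, toReducedWord, List.map_map]
  rfl

theorem wordProd_notMem_range {gs : ℕ → G} {εs : ℕ → ℤ} {n : ℕ} (hn : 1 ≤ n)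
    (hsign : IsSign εs n) (hred : Reduced A B gs εs n) :
    wordProd A B φ gs εs n ∉ (of : G →* HNNExtension G A B φ).range := by
  intro hmem
  rw [← prod_toReducedWord φ hsign hred] at hmem
  have hnil := ReducedWord.toList_eq_nil_of_mem_of_range φ _ hmem
  simp only [toReducedWord, List.map_eq_nil_iff, List.range_eq_nil] at hnil
  omega

end HNNStmt

open HNNExtension HNNStmt

/-- Britton's lemma: in an HNN extension `Γ = HNN(G, H, θ)`, any reduced
word `g₁τ^{ε₁}⋯g_nτ^{ε_n}g_{n+1}` with `n ≥ 1` is a non-identity element; in particular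
it does not lie in the image of `G`. -/
theorem stmt_12 {G : Type*} [Group G] (A B : Subgroup G) (φ : A ≃* B)
    (n : ℕ) (hn : 1 ≤ n) (gs : ℕ → G) (εs : ℕ → ℤ)
    (hsign : IsSign εs n) (hred : Reduced A B gs εs n) :
    wordProd A B φ gs εs n ≠ 1 ∧
      wordProd A B φ gs εs n ∉ (of : G →* HNNExtension G A B φ).range := by
  have hG := wordProd_notMem_range φ hn hsign hred
  exact ⟨fun h => hG (h ▸ one_mem _), hG⟩
end

section
/- The group G generated by involutions g₀, g₁ and elements h(x) for x ∈ X subject to the relations (R1)–(R3) and the g-relations is locally finite: every finitely generated subgroup of G is finite. In particular G is amenable. -/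
namespace ExampleGroup

/-- A pair `(i, j) ∈ {0,1}²`, with `0 = false`, `1 = true`. -/
abbrev Pair := Bool × Bool

/-- The index set `X`: non-empty sequences of pairs `(i₁,j₁,…,i_n,j_n)` such that
`(j_k, i_{k+1}, j_{k+1}) ∉ {(0,0,1), (1,0,0)}` for all `k`. -/
def Valid (l : List Pair) : Prop :=
  l ≠ [] ∧ l.Chain' (fun p q =>
    ¬((p.2 = false ∧ q.1 = false ∧ q.2 = true) ∨ (p.2 = true ∧ q.1 = false ∧ q.2 = false)))

def X : Type := {l : List Pair // Valid l}

/-- The relations of the group `H̲` on the generators `h(x)`, `x ∈ X`: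
(R1) `h(x)² = 1`; (R2) generators of equal length commute; (R3) conjugating
`h(x)` by `h(x')` with `ℓ(x') = k < ℓ(x)` flips `i_{k+1}` exactly when `x'` is the
length-`k` prefix of `x` and `j_k = j_{k+1}`, and fixes `h(x)` otherwise. -/
def relsH : Set (FreeGroup X) :=
  {w | ∃ x : X, w = FreeGroup.of x * FreeGroup.of x} ∪
  {w | ∃ x y : X, x.1.length = y.1.length ∧
      w = FreeGroup.of x * FreeGroup.of y * (FreeGroup.of x)⁻¹ * (FreeGroup.of y)⁻¹} ∪
  {w | ∃ (p x x' : X) (i j : Bool) (rest : List Pair) (hne : p.1 ≠ []),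
      x.1 = p.1 ++ (i, j) :: rest ∧ x'.1 = p.1 ++ (!i, j) :: rest ∧
      (p.1.getLast hne).2 = j ∧
      w = FreeGroup.of p * FreeGroup.of x * (FreeGroup.of p)⁻¹ * (FreeGroup.of x')⁻¹} ∪
  {w | ∃ (p x : X), p.1.length < x.1.length ∧
      ¬(∃ (i j : Bool) (rest : List Pair) (hne : p.1 ≠ []),
          x.1 = p.1 ++ (i, j) :: rest ∧ (p.1.getLast hne).2 = j) ∧
      w = FreeGroup.of p * FreeGroup.of x * (FreeGroup.of p)⁻¹ * (FreeGroup.of x)⁻¹}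

/-- The relations of the group `G = ⟨H̲, g₀, g₁⟩`: those of `H̲`, together with
`g₀² = g₁² = 1`, `g₀g₁ = g₁g₀`, `g_j` commutes with `h(i, j⊕1, …)`, and
`g_j h(i, j, …) g_j = h(i⊕1, j, …)`. -/
def relsG : Set (FreeGroup (X ⊕ Bool)) :=
  (⇑(FreeGroup.map (Sum.inl : X → X ⊕ Bool)) '' relsH) ∪
  {w | ∃ j : Bool, w = FreeGroup.of (Sum.inr j) * FreeGroup.of (Sum.inr j)} ∪
  {w | w = FreeGroup.of (Sum.inr false) * FreeGroup.of (Sum.inr true) *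
      (FreeGroup.of (Sum.inr false))⁻¹ * (FreeGroup.of (Sum.inr true))⁻¹} ∪
  {w | ∃ (j i : Bool) (rest : List Pair) (x : X), x.1 = (i, !j) :: rest ∧
      w = FreeGroup.of (Sum.inr j) * FreeGroup.of (Sum.inl x) *
        (FreeGroup.of (Sum.inr j))⁻¹ * (FreeGroup.of (Sum.inl x))⁻¹} ∪
  {w | ∃ (j i : Bool) (rest : List Pair) (x x' : X),
      x.1 = (i, j) :: rest ∧ x'.1 = (!i, j) :: rest ∧
      w = FreeGroup.of (Sum.inr j) * FreeGroup.of (Sum.inl x) *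
        (FreeGroup.of (Sum.inr j))⁻¹ * (FreeGroup.of (Sum.inl x'))⁻¹}

end ExampleGroup

open ExampleGroup

/-!
Let `Kₙ` be the subgroup generated by `g₀`, `g₁` and the `h(x)` with `ℓ(x) ≤ n`; these exhaust
`G`, so it suffices that each `Kₙ` is finite. `K₀` is generated by two commuting involutions.
By (R1) and (R2) the `h(x)` with `ℓ(x) = n + 1` are commuting involutions, so they generate a
finite group `Aₙ₊₁`; by (R3) and the `g`-relations every generator of `Kₙ` conjugates such an
`h(x)` to some `h(x')` with `ℓ(x') = n + 1`, so `Kₙ` normalizes `Aₙ₊₁` and `Kₙ₊₁ = Kₙ Aₙ₊₁` is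
finite. An invariant mean on a locally finite group is an ultrafilter limit of the uniform
measures on the finite subgroups `⟨F⟩`, `F` a finite subset, as `F` grows.
-/

open Subgroup Pointwise

section LocallyFinite

variable {G : Type*} [Group G]

theorem isOfFinOrder_of_mul_self_eq_one {x : G} (hx : x * x = 1) : IsOfFinOrder x :=
  isOfFinOrder_iff_pow_eq_one.2 ⟨2, two_pos, by rw [pow_two, hx]⟩

namespace Subgroup

theorem finite_closure_union {S T : Set G} (hS : (closure S : Set G).Finite)
    (hT : (closure T : Set G).Finite) (hST : closure S ≤ normalizer (closure T : Set G)) :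
    (closure (S ∪ T) : Set G).Finite := by
  rw [closure_union, coe_mul_of_left_le_normalizer_right _ _ hST]
  exact hS.mul hT

theorem finite_closure_of_commute {S : Set G} (hS : S.Finite) (hfin : ∀ s ∈ S, IsOfFinOrder s)
    (hcomm : ∀ s ∈ S, ∀ t ∈ S, Commute s t) : (closure S : Set G).Finite := by
  induction S, hS using Set.Finite.induction_on with
  | empty => simp
  | @insert a S _ _ ih =>
    rw [Set.insert_eq, Set.union_comm]
    refine finite_closure_union (ih (fun s hs => hfin s (.inr hs))
      (fun s hs t ht => hcomm s (.inr hs) t (.inr ht))) ?_ ?_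
    · rw [← zpowers_eq_closure]
      exact (hfin a (.inl rfl)).finite_zpowers
    · refine le_trans ?_ (centralizer_le_normalizer _)
      rw [centralizer_closure, closure_le]
      intro s hs b hb
      rw [Set.mem_singleton_iff.1 hb]
      exact hcomm a (.inl rfl) s (.inr hs)

theorem mem_normalizer_closure_of_mul_self_eq_one {s : G} {T : Set G} (hs : s * s = 1)
    (hT : ∀ t ∈ T, s * t * s⁻¹ ∈ T) : s ∈ normalizer (closure T : Set G) := by
  have hinv : s⁻¹ = s := inv_eq_of_mul_eq_one_right hs
  rw [mem_normalizer_iff_map_conj_eq, MonoidHom.map_closure]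
  congr 1
  ext t
  constructor
  · rintro ⟨x, hx, rfl⟩
    exact hT x hx
  · intro ht
    exact ⟨s⁻¹ * t * s, by simpa [hinv] using hT t ht, by simp [mul_assoc]⟩

noncomputable def density (H : Subgroup G) (A : Set G) : ℝ :=
  ((A ∩ H).ncard : ℝ) / (H : Set G).ncard

variable {H : Subgroup G}

theorem density_nonneg (A : Set G) : 0 ≤ H.density A := by
  unfold density; positivity

theorem density_le_one (hH : (H : Set G).Finite) (A : Set G) : H.density A ≤ 1 :=
  div_le_one_of_le₀ (by exact_mod_cast Set.ncard_le_ncard Set.inter_subset_right hH) (by positivity)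

theorem density_univ (hH : (H : Set G).Finite) : H.density Set.univ = 1 := by
  rw [density, Set.univ_inter, div_self]
  exact_mod_cast (Set.ncard_pos hH).2 ⟨1, H.one_mem⟩ |>.ne'

theorem density_union (hH : (H : Set G).Finite) {A B : Set G} (hAB : Disjoint A B) :
    H.density (A ∪ B) = H.density A + H.density B := by
  rw [density, density, density, ← add_div, Set.union_inter_distrib_right,
    Set.ncard_union_eq (hAB.mono Set.inter_subset_left Set.inter_subset_left)
      (hH.subset Set.inter_subset_right) (hH.subset Set.inter_subset_right), Nat.cast_add]

theorem density_image_mul_left {g : G} (hg : g ∈ H) (A : Set G) :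
    H.density ((g * ·) '' A) = H.density A := by
  have : (g * ·) '' A ∩ H = (g * ·) '' (A ∩ H) := by
    rw [Set.image_inter (mul_right_injective g), Set.image_mul_left]
    congr 1
    ext x
    simp [mul_mem_cancel_left (inv_mem hg)]
  rw [density, density, this, Set.ncard_image_of_injective _ (mul_right_injective g)]

end Subgroup

def IsLocallyFinite (G : Type*) [Group G] : Prop :=
  ∀ s : Finset G, (closure (s : Set G) : Set G).Finite

theorem isLocallyFinite_of_iSup_eq_top {K : ℕ → Subgroup G} (hK : Monotone K)
    (hfin : ∀ n, (K n : Set G).Finite) (htop : ⨆ n, K n = ⊤) : IsLocallyFinite G := by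
  intro s
  have hs : (s : Set G) ⊆ ⋃ n, (K n : Set G) := by
    rw [← coe_iSup_of_directed hK.directed_le, htop]
    exact Set.subset_univ _
  have hdir : Monotone fun n => (K n : Set G) := fun _ _ hmn => hK hmn
  obtain ⟨n, hn⟩ := hdir.directed_le.exists_mem_subset_of_finset_subset_biUnion hs
  exact (hfin n).subset (closure_le _ |>.2 hn)

open Filter Topology in
theorem IsLocallyFinite.isAmenable (hG : IsLocallyFinite G) : IsAmenable G := by
  let U : Ultrafilter (Finset G) := .of atTop
  let m (A : Set G) (F : Finset G) : ℝ := (closure (F : Set G)).density A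
  have hlim (A : Set G) : ∃ r, Tendsto (m A) U (𝓝 r) := by
    have hbdd (F : Finset G) : m A F ∈ Set.Icc (0 : ℝ) 1 :=
      ⟨density_nonneg A, density_le_one (hG F) A⟩
    obtain ⟨r, -, hr⟩ := isCompact_Icc.ultrafilter_le_nhds (U.map (m A))
      (le_principal_iff.2 (Ultrafilter.mem_map.2 (Eventually.of_forall hbdd)))
    exact ⟨r, hr⟩
  choose μ hμ using hlim
  refine ⟨μ, fun A => ge_of_tendsto' (hμ A) fun F => density_nonneg A, ?_, ?_, ?_⟩
  · refine tendsto_nhds_unique (hμ _) (tendsto_const_nhds.congr fun F => ?_)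
    exact (density_univ (hG F)).symm
  · intro A B hAB
    refine tendsto_nhds_unique (hμ _) (((hμ A).add (hμ B)).congr fun F => ?_)
    exact (density_union (hG F) hAB).symm
  · intro g A
    have hg : ∀ᶠ F : Finset G in U, g ∈ closure (F : Set G) :=
      Ultrafilter.of_le _ <| (eventually_ge_atTop {g}).mono fun F hF =>
        Subgroup.subset_closure (Finset.singleton_subset_iff.1 hF)
    refine tendsto_nhds_unique (hμ _) ((hμ A).congr' (hg.mono fun F hF => ?_))
    exact (density_image_mul_left hF A).symm

end LocallyFinite

theorem PresentedGroup.mk_conj_eq_of_mem {α : Type*} {rels : Set (FreeGroup α)}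
    {a b c : FreeGroup α} (hw : a * b * a⁻¹ * c⁻¹ ∈ rels) :
    PresentedGroup.mk rels a * PresentedGroup.mk rels b * (PresentedGroup.mk rels a)⁻¹ =
      PresentedGroup.mk rels c := by
  simpa only [map_mul, map_inv, mul_inv_eq_one] using PresentedGroup.one_of_mem hw

namespace ExampleGroup

-- The constraint on `(j_k, i_{k+1}, j_{k+1})` does not involve `i_{k+1}` when `j_k = j_{k+1}`.
theorem valid_flip {q rest : List Pair} {i i' j : Bool} (hj : ∀ a ∈ q.getLast?, a.2 = j)
    (hv : Valid (q ++ (i, j) :: rest)) : Valid (q ++ (i', j) :: rest) := by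
  obtain ⟨-, hc : List.IsChain _ _⟩ := hv
  refine ⟨by simp, show List.IsChain _ _ from ?_⟩
  rw [List.isChain_append] at hc ⊢
  refine ⟨hc.1, ?_, fun a ha b hb => ?_⟩
  · rw [List.isChain_cons] at hc ⊢
    exact hc.2.1
  · obtain rfl : b = (i', j) := by simpa using hb.symm
    cases j <;> simp [hj a ha]

def h (x : X) : PresentedGroup relsG := PresentedGroup.of (Sum.inl x)

def g (j : Bool) : PresentedGroup relsG := PresentedGroup.of (Sum.inr j)

theorem map_inl_mem_relsG {w : FreeGroup X} (hw : w ∈ relsH) :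
    FreeGroup.map Sum.inl w ∈ relsG :=
  Or.inl <| Or.inl <| Or.inl <| Or.inl ⟨w, hw, rfl⟩

theorem h_conj_eq_of_mem {p x y : X}
    (hw : FreeGroup.of p * FreeGroup.of x * (FreeGroup.of p)⁻¹ * (FreeGroup.of y)⁻¹ ∈ relsH) :
    h p * h x * (h p)⁻¹ = h y :=
  PresentedGroup.mk_conj_eq_of_mem (by simpa using map_inl_mem_relsG hw)

theorem h_mul_self (x : X) : h x * h x = 1 :=
  PresentedGroup.one_of_mem (by simpa using map_inl_mem_relsG (Or.inl <| Or.inl <| Or.inl ⟨x, rfl⟩))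

theorem g_mul_self (j : Bool) : g j * g j = 1 :=
  PresentedGroup.one_of_mem (Or.inl <| Or.inl <| Or.inl <| Or.inr ⟨j, rfl⟩)

theorem commute_h {x y : X} (hxy : x.1.length = y.1.length) : Commute (h x) (h y) :=
  mul_inv_eq_iff_eq_mul.1 (h_conj_eq_of_mem (Or.inl <| Or.inl <| Or.inr ⟨x, y, hxy, rfl⟩))

theorem commute_g (j j' : Bool) : Commute (g j) (g j') := by
  have h01 : Commute (g false) (g true) := mul_inv_eq_iff_eq_mul.1
    (PresentedGroup.mk_conj_eq_of_mem (Or.inl <| Or.inl <| Or.inr rfl))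
  cases j <;> cases j'
  all_goals first | exact Commute.refl _ | exact h01 | exact h01.symm

theorem exists_h_conj_h {p x : X} (hpx : p.1.length < x.1.length) :
    ∃ y : X, y.1.length = x.1.length ∧ h p * h x * (h p)⁻¹ = h y := by
  by_cases hflip : ∃ (i j : Bool) (rest : List Pair) (hne : p.1 ≠ []),
      x.1 = p.1 ++ (i, j) :: rest ∧ (p.1.getLast hne).2 = j
  · obtain ⟨i, j, rest, hne, hx, hj⟩ := hflip
    have hv : Valid (p.1 ++ (!i, j) :: rest) :=
      valid_flip (by simp [List.getLast?_eq_some_getLast hne, hj]) (hx ▸ x.2)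
    exact ⟨⟨_, hv⟩, by simp [hx],
      h_conj_eq_of_mem (Or.inl <| Or.inr ⟨p, x, ⟨_, hv⟩, i, j, rest, hne, hx, rfl, hj, rfl⟩)⟩
  · exact ⟨x, rfl, h_conj_eq_of_mem (Or.inr ⟨p, x, hpx, hflip, rfl⟩)⟩

theorem exists_g_conj_h (j : Bool) (x : X) :
    ∃ y : X, y.1.length = x.1.length ∧ g j * h x * (g j)⁻¹ = h y := by
  obtain ⟨_ | ⟨⟨i, j'⟩, rest⟩, hx⟩ := x
  · exact absurd rfl hx.1
  obtain rfl | rfl : j' = j ∨ j' = !j := by cases j <;> cases j' <;> simp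
  · have hv : Valid ((!i, j') :: rest) := valid_flip (q := []) (by simp) hx
    exact ⟨⟨_, hv⟩, rfl, PresentedGroup.mk_conj_eq_of_mem
      (Or.inr ⟨j', i, rest, ⟨_, hx⟩, ⟨_, hv⟩, rfl, rfl, rfl⟩)⟩
  · exact ⟨_, rfl, PresentedGroup.mk_conj_eq_of_mem
      (Or.inl <| Or.inr ⟨j, i, rest, ⟨_, hx⟩, rfl, rfl⟩)⟩

def layer (n : ℕ) : Set (PresentedGroup relsG) := h '' {x | x.1.length = n}

def gens (n : ℕ) : Set (PresentedGroup relsG) := Set.range g ∪ h '' {x | x.1.length ≤ n}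

theorem gens_zero : gens 0 = Set.range g := by
  simp [gens, fun x : X => x.2.1]

theorem gens_succ (n : ℕ) : gens (n + 1) = gens n ∪ layer (n + 1) := by
  simp only [gens, layer, Nat.le_succ_iff, Set.ofPred_or, Set.image_union, Set.union_assoc]

theorem monotone_closure_gens : Monotone fun n => closure (gens n) :=
  fun _ _ hmn => closure_mono <| Set.union_subset_union_right _ <|
    Set.image_mono fun _ hx => le_trans hx hmn

theorem finite_closure_layer (n : ℕ) : (closure (layer n) : Set (PresentedGroup relsG)).Finite := by
  refine finite_closure_of_commute (((List.finite_length_eq Pair n).preimage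
    Subtype.val_injective.injOn).image h) ?_ ?_
  · rintro _ ⟨x, -, rfl⟩
    exact isOfFinOrder_of_mul_self_eq_one (h_mul_self x)
  · rintro _ ⟨x, hx, rfl⟩ _ ⟨y, hy, rfl⟩
    exact commute_h (hx.trans hy.symm)

theorem mul_self_eq_one_of_mem_gens {n : ℕ} {s : PresentedGroup relsG} (hs : s ∈ gens n) :
    s * s = 1 := by
  rcases hs with ⟨j, rfl⟩ | ⟨x, -, rfl⟩
  exacts [g_mul_self j, h_mul_self x]

theorem conj_mem_layer_succ {n : ℕ} {s t : PresentedGroup relsG} (hs : s ∈ gens n)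
    (ht : t ∈ layer (n + 1)) : s * t * s⁻¹ ∈ layer (n + 1) := by
  obtain ⟨x, hx, rfl⟩ := ht
  obtain ⟨y, hy, hconj⟩ : ∃ y : X, y.1.length = x.1.length ∧ s * h x * s⁻¹ = h y := by
    rcases hs with ⟨j, rfl⟩ | ⟨p, hp, rfl⟩
    · exact exists_g_conj_h j x
    · exact exists_h_conj_h (hp.trans_lt (hx ▸ lt_add_one n))
  exact ⟨y, hy.trans hx, hconj.symm⟩

theorem closure_gens_le_normalizer_layer_succ (n : ℕ) :
    closure (gens n) ≤ normalizer (closure (layer (n + 1)) : Set (PresentedGroup relsG)) :=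
  (closure_le _).2 fun _ hs => mem_normalizer_closure_of_mul_self_eq_one
    (mul_self_eq_one_of_mem_gens hs) fun _ => conj_mem_layer_succ hs

theorem finite_closure_gens (n : ℕ) : (closure (gens n) : Set (PresentedGroup relsG)).Finite := by
  induction n with
  | zero =>
    rw [gens_zero]
    refine finite_closure_of_commute (Set.finite_range g) ?_ ?_
    · rintro _ ⟨j, rfl⟩
      exact isOfFinOrder_of_mul_self_eq_one (g_mul_self j)
    · rintro _ ⟨j, rfl⟩ _ ⟨j', rfl⟩
      exact commute_g j j'
  | succ n ih =>
    rw [gens_succ]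
    exact finite_closure_union ih (finite_closure_layer _) (closure_gens_le_normalizer_layer_succ n)

theorem iSup_closure_gens : ⨆ n, closure (gens n) = ⊤ := by
  rw [← Subgroup.closure_iUnion, eq_top_iff, ← PresentedGroup.closure_range_of]
  refine closure_mono ?_
  rintro _ ⟨x | j, rfl⟩
  · exact Set.mem_iUnion.2 ⟨x.1.length, .inr ⟨x, Nat.le_refl _, rfl⟩⟩
  · exact Set.mem_iUnion.2 ⟨0, .inl ⟨j, rfl⟩⟩

theorem isLocallyFinite : IsLocallyFinite (PresentedGroup relsG) :=
  isLocallyFinite_of_iSup_eq_top monotone_closure_gens finite_closure_gens iSup_closure_gens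

end ExampleGroup

/-- The group `G` generated by the involutions `g₀, g₁` and the elements
`h(x)`, `x ∈ X`, subject to the relations (R1)–(R3) and the `g`-relations, is locally
finite: every finitely generated subgroup is finite. In particular `G` is amenable. -/
theorem stmt_16 :
    (∀ s : Finset (PresentedGroup relsG),
      ((Subgroup.closure (s : Set (PresentedGroup relsG))
          : Subgroup (PresentedGroup relsG)) : Set (PresentedGroup relsG)).Finite) ∧
    IsAmenable (PresentedGroup relsG) :=
  ⟨ExampleGroup.isLocallyFinite, ExampleGroup.isLocallyFinite.isAmenable⟩
end

section
/- In the group G built from the generators h(x) (x ∈ X) and involutions g₀, g₁, the subgroups ⟨H(0,0)⟩ and ⟨H(0,1)⟩ intersect trivially: ⟨H(0,0)⟩ ∩ ⟨H(0,1)⟩ = {1}. More generally, for each x ∈ {0,1}² there is a retraction homomorphism H̲ → ⟨H(x)⟩ which is the identity on ⟨H(x)⟩ and kills every h(y) with first pair π₁(y) ≠ x; hence ⟨H(x)⟩ ∩ ⟨H(y)⟩ = {1} for distinct x, y ∈ {0,1}². -/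
namespace ExampleGroup

/-- The generating set `H(pr) = {h(x) : π₁(x) = pr}` inside `H̲`. -/
def HsetH (pr : Pair) : Set (PresentedGroup relsH) :=
  {w | ∃ x : X, x.1.head? = some pr ∧ w = PresentedGroup.of x}

/-- The generating set `H(pr) = {h(x) : π₁(x) = pr}` inside `G`. -/
def HsetG (pr : Pair) : Set (PresentedGroup relsG) :=
  {w | ∃ x : X, x.1.head? = some pr ∧ w = PresentedGroup.of (Sum.inl x)}

end ExampleGroup


namespace ExampleGroup

section Aux

/-! ### Generic helpers about presented groups and closures -/

lemma mk_rel_eq_one {α : Type*} {rels : Set (FreeGroup α)} {r : FreeGroup α} (hr : r ∈ rels) :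
    PresentedGroup.mk rels r = 1 :=
  (QuotientGroup.eq_one_iff r).2 (Subgroup.subset_normalClosure hr)

lemma rel_sq {α : Type*} {rels : Set (FreeGroup α)} {a : α}
    (h : FreeGroup.of a * FreeGroup.of a ∈ rels) :
    (PresentedGroup.of a : PresentedGroup rels) * PresentedGroup.of a = 1 := by
  have := mk_rel_eq_one h
  simpa [PresentedGroup.of, map_mul] using this

lemma rel4 {α : Type*} {rels : Set (FreeGroup α)} {a b c d : α}
    (h : FreeGroup.of a * FreeGroup.of b * (FreeGroup.of c)⁻¹ * (FreeGroup.of d)⁻¹ ∈ rels) :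
    (PresentedGroup.of a : PresentedGroup rels) * PresentedGroup.of b *
      (PresentedGroup.of c)⁻¹ * (PresentedGroup.of d)⁻¹ = 1 := by
  have := mk_rel_eq_one h
  simpa [PresentedGroup.of, map_mul, map_inv] using this

lemma hom_fix_closure {G : Type*} [Group G] (f : G →* G) {s : Set G}
    (h : ∀ x ∈ s, f x = x) : ∀ w ∈ Subgroup.closure s, f w = w := fun w hw =>
  Subgroup.closure_induction (p := fun g _ => f g = g) h (map_one f)
    (fun a b _ _ ha hb => by show f (a * b) = a * b; rw [map_mul, ha, hb])
    (fun a _ ha => by show f a⁻¹ = a⁻¹; rw [map_inv, ha]) hw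

lemma hom_kill_closure {G H : Type*} [Group G] [Group H] (f : G →* H) {s : Set G}
    (h : ∀ x ∈ s, f x = 1) : ∀ w ∈ Subgroup.closure s, f w = 1 := fun w hw =>
  Subgroup.closure_induction (p := fun g _ => f g = 1) h (map_one f)
    (fun a b _ _ ha hb => by show f (a * b) = 1; rw [map_mul, ha, hb, one_mul])
    (fun a _ ha => by show f a⁻¹ = 1; rw [map_inv, ha, inv_one]) hw

lemma trivial_inter {G : Type*} [Group G] (f : G →* G) {s t : Set G}
    (hs : ∀ x ∈ s, f x = x) (ht : ∀ x ∈ t, f x = 1) :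
    Subgroup.closure s ⊓ Subgroup.closure t = ⊥ := by
  rw [eq_bot_iff]
  intro w hw
  rw [Subgroup.mem_inf] at hw
  rw [Subgroup.mem_bot, ← hom_fix_closure f hs w hw.1]
  exact hom_kill_closure f ht w hw.2

lemma head?_append_left {l l' : List Pair} (h : l ≠ []) : (l ++ l').head? = l.head? := by
  cases l with
  | nil => exact absurd rfl h
  | cons a t => rfl

/-! ### Membership lemmas for the relations -/

lemma memH1 (x : X) : FreeGroup.of x * FreeGroup.of x ∈ relsH := by
  simp only [relsH, Set.mem_union, Set.mem_setOf_eq]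
  exact Or.inl (Or.inl (Or.inl ⟨x, rfl⟩))

lemma memH2 {x y : X} (h : x.1.length = y.1.length) :
    FreeGroup.of x * FreeGroup.of y * (FreeGroup.of x)⁻¹ * (FreeGroup.of y)⁻¹ ∈ relsH := by
  simp only [relsH, Set.mem_union, Set.mem_setOf_eq]
  exact Or.inl (Or.inl (Or.inr ⟨x, y, h, rfl⟩))

lemma memH3 {p x x' : X} {i j : Bool} {rest : List Pair} (hne : p.1 ≠ [])
    (hx : x.1 = p.1 ++ (i, j) :: rest) (hx' : x'.1 = p.1 ++ (!i, j) :: rest)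
    (hj : (p.1.getLast hne).2 = j) :
    FreeGroup.of p * FreeGroup.of x * (FreeGroup.of p)⁻¹ * (FreeGroup.of x')⁻¹ ∈ relsH := by
  simp only [relsH, Set.mem_union, Set.mem_setOf_eq]
  exact Or.inl (Or.inr ⟨p, x, x', i, j, rest, hne, hx, hx', hj, rfl⟩)

lemma memH4 {p x : X} (hl : p.1.length < x.1.length)
    (hn : ¬(∃ (i j : Bool) (rest : List Pair) (hne : p.1 ≠ []),
        x.1 = p.1 ++ (i, j) :: rest ∧ (p.1.getLast hne).2 = j)) :
    FreeGroup.of p * FreeGroup.of x * (FreeGroup.of p)⁻¹ * (FreeGroup.of x)⁻¹ ∈ relsH := by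
  simp only [relsH, Set.mem_union, Set.mem_setOf_eq]
  exact Or.inr ⟨p, x, hl, hn, rfl⟩

lemma memG_img {r : FreeGroup X} (h : r ∈ relsH) :
    FreeGroup.map (Sum.inl : X → X ⊕ Bool) r ∈ relsG := by
  simp only [relsG, Set.mem_union]
  exact Or.inl (Or.inl (Or.inl (Or.inl ⟨r, h, rfl⟩)))

/-! ### A generic criterion for lifting maps out of `H̲` -/

lemma liftH {G : Type*} [Group G] (F : X → G)
    (h1 : ∀ x : X, F x * F x = 1)
    (h2 : ∀ x y : X, x.1.length = y.1.length → F x * F y * (F x)⁻¹ * (F y)⁻¹ = 1)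
    (h3 : ∀ (p x x' : X) (i j : Bool) (rest : List Pair) (hne : p.1 ≠ []),
        x.1 = p.1 ++ (i, j) :: rest → x'.1 = p.1 ++ (!i, j) :: rest →
        (p.1.getLast hne).2 = j → F p * F x * (F p)⁻¹ * (F x')⁻¹ = 1)
    (h4 : ∀ p x : X, p.1.length < x.1.length →
        ¬(∃ (i j : Bool) (rest : List Pair) (hne : p.1 ≠ []),
            x.1 = p.1 ++ (i, j) :: rest ∧ (p.1.getLast hne).2 = j) →
        F p * F x * (F p)⁻¹ * (F x)⁻¹ = 1) :
    ∀ r ∈ relsH, FreeGroup.lift F r = 1 := by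
  intro r hr
  simp only [relsH, Set.mem_union, Set.mem_setOf_eq] at hr
  rcases hr with (((⟨x, rfl⟩ | ⟨x, y, hl, rfl⟩) | ⟨p, x, x', i, j, rest, hne, hx, hx', hj, rfl⟩) |
    ⟨p, x, hl, hn, rfl⟩) <;> simp only [map_mul, map_inv, FreeGroup.lift_apply_of]
  · exact h1 x
  · exact h2 x y hl
  · exact h3 p x x' i j rest hne hx hx' hj
  · exact h4 p x hl hn

/-! ### The retraction of `H̲` onto `⟨H(pr)⟩` -/

def FH (pr : Pair) : X → PresentedGroup relsH := fun x =>
  if x.1.head? = some pr then PresentedGroup.of x else 1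

lemma FH_lift (pr : Pair) : ∀ r ∈ relsH, FreeGroup.lift (FH pr) r = 1 := by
  refine liftH (FH pr) ?_ ?_ ?_ ?_
  · intro x
    by_cases hx : x.1.head? = some pr
    · simp only [FH, if_pos hx]
      exact rel_sq (memH1 x)
    · simp only [FH, if_neg hx, one_mul]
  · intro x y hl
    by_cases hx : x.1.head? = some pr
    · by_cases hy : y.1.head? = some pr
      · simp only [FH, if_pos hx, if_pos hy]
        exact rel4 (memH2 hl)
      · simp only [FH, if_pos hx, if_neg hy]; group
    · simp only [FH, if_neg hx]; group
  · intro p x x' i j rest hne hx hx' hj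
    have e1 : x.1.head? = p.1.head? := by rw [hx, head?_append_left hne]
    have e2 : x'.1.head? = p.1.head? := by rw [hx', head?_append_left hne]
    by_cases hp : p.1.head? = some pr
    · simp only [FH, e1, e2, if_pos hp]
      exact rel4 (memH3 hne hx hx' hj)
    · simp only [FH, e1, e2, if_neg hp]; group
  · intro p x hl hn
    by_cases hp : p.1.head? = some pr
    · by_cases hx : x.1.head? = some pr
      · simp only [FH, if_pos hp, if_pos hx]
        exact rel4 (memH4 hl hn)
      · simp only [FH, if_pos hp, if_neg hx]; group
    · simp only [FH, if_neg hp]; group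

def phiH (pr : Pair) : PresentedGroup relsH →* PresentedGroup relsH :=
  PresentedGroup.toGroup (FH_lift pr)

lemma phiH_of (pr : Pair) (x : X) : phiH pr (PresentedGroup.of x) = FH pr x :=
  PresentedGroup.toGroup.of _

lemma phiH_fix (pr : Pair) : ∀ w ∈ Subgroup.closure (HsetH pr), phiH pr w = w := by
  refine hom_fix_closure _ ?_
  rintro w ⟨x, hx, rfl⟩
  rw [phiH_of]
  simp only [FH, if_pos hx]

lemma phiH_kill (pr : Pair) (x : X) (hx : x.1.head? ≠ some pr) :
    phiH pr (PresentedGroup.of x) = 1 := by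
  rw [phiH_of]
  simp only [FH, if_neg hx]

lemma phiH_range (pr : Pair) (w : PresentedGroup relsH) :
    phiH pr w ∈ Subgroup.closure (HsetH pr) := by
  have hw : w ∈ Subgroup.closure (Set.range (PresentedGroup.of : X → PresentedGroup relsH)) := by
    rw [PresentedGroup.closure_range_of]; trivial
  refine Subgroup.closure_induction (p := fun g _ => phiH pr g ∈ Subgroup.closure (HsetH pr))
    ?_ ?_ ?_ ?_ hw
  · rintro g ⟨x, rfl⟩
    rw [phiH_of]
    by_cases hx : x.1.head? = some pr
    · simp only [FH, if_pos hx]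
      exact Subgroup.subset_closure ⟨x, hx, rfl⟩
    · simp only [FH, if_neg hx]
      exact Subgroup.one_mem _
  · show phiH pr 1 ∈ _
    rw [map_one]; exact Subgroup.one_mem _
  · intro a b _ _ ha hb
    show phiH pr (a * b) ∈ _
    rw [map_mul]; exact Subgroup.mul_mem _ ha hb
  · intro a _ ha
    show phiH pr a⁻¹ ∈ _
    rw [map_inv]; exact Subgroup.inv_mem _ ha

/-! ### The retraction of `G` killing the `j₁ = 1` part and `g₁` -/

def FG : X ⊕ Bool → PresentedGroup relsG
  | Sum.inl x => if x.1.head?.map Prod.snd = some false then PresentedGroup.of (Sum.inl x) else 1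
  | Sum.inr b => if b = false then PresentedGroup.of (Sum.inr false) else 1

lemma relG4 {r : FreeGroup X} (h : r ∈ relsH) {a b c d : X}
    (hr : r = FreeGroup.of a * FreeGroup.of b * (FreeGroup.of c)⁻¹ * (FreeGroup.of d)⁻¹) :
    (PresentedGroup.of (Sum.inl a) : PresentedGroup relsG) * PresentedGroup.of (Sum.inl b) *
      (PresentedGroup.of (Sum.inl c))⁻¹ * (PresentedGroup.of (Sum.inl d))⁻¹ = 1 := by
  refine rel4 ?_
  have := memG_img h
  rw [hr] at this
  simpa [map_mul, map_inv] using this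

lemma FG_lift : ∀ r ∈ relsG, FreeGroup.lift FG r = 1 := by
  intro r hr
  simp only [relsG, Set.mem_union, Set.mem_setOf_eq, Set.mem_image] at hr
  rcases hr with ((((⟨r₀, hr₀, rfl⟩ | ⟨j, rfl⟩) | rfl) | ⟨j, i, rest, x, hx, rfl⟩) |
    ⟨j, i, rest, x, x', hx, hx', rfl⟩)
  · -- image of a relation of H̲
    have key : FreeGroup.lift FG (FreeGroup.map (Sum.inl : X → X ⊕ Bool) r₀) =
        FreeGroup.lift (fun x => FG (Sum.inl x)) r₀ := by
      have : (FreeGroup.lift FG).comp (FreeGroup.map (Sum.inl : X → X ⊕ Bool)) =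
          FreeGroup.lift (fun x => FG (Sum.inl x)) := by
        apply FreeGroup.ext_hom
        intro a
        simp
      exact DFunLike.congr_fun this r₀
    rw [key]
    refine liftH _ ?_ ?_ ?_ ?_ r₀ hr₀
    · intro x
      by_cases hx : x.1.head?.map Prod.snd = some false
      · simp only [FG, if_pos hx]
        exact rel_sq (by simpa [map_mul] using memG_img (memH1 x))
      · simp only [FG, if_neg hx, one_mul]
    · intro x y hl
      by_cases hx : x.1.head?.map Prod.snd = some false
      · by_cases hy : y.1.head?.map Prod.snd = some false
        · simp only [FG, if_pos hx, if_pos hy]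
          exact relG4 (memH2 hl) rfl
        · simp only [FG, if_pos hx, if_neg hy]; group
      · simp only [FG, if_neg hx]; group
    · intro p x x' i j rest hne hx hx' hj
      have e1 : x.1.head? = p.1.head? := by rw [hx, head?_append_left hne]
      have e2 : x'.1.head? = p.1.head? := by rw [hx', head?_append_left hne]
      by_cases hp : p.1.head?.map Prod.snd = some false
      · simp only [FG, e1, e2, if_pos hp]
        exact relG4 (memH3 hne hx hx' hj) rfl
      · simp only [FG, e1, e2, if_neg hp]; group
    · intro p x hl hn
      by_cases hp : p.1.head?.map Prod.snd = some false
      · by_cases hx : x.1.head?.map Prod.snd = some false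
        · simp only [FG, if_pos hp, if_pos hx]
          exact relG4 (memH4 hl hn) rfl
        · simp only [FG, if_pos hp, if_neg hx]; group
      · simp only [FG, if_neg hp]; group
  · -- g_j² = 1
    cases j with
    | false =>
      simp only [map_mul, FreeGroup.lift_apply_of, FG, if_pos rfl]
      refine rel_sq ?_
      simp only [relsG, Set.mem_union, Set.mem_setOf_eq]
      exact Or.inl (Or.inl (Or.inl (Or.inr ⟨false, rfl⟩)))
    | true =>
      simp [FG]
  · -- g₀ g₁ = g₁ g₀
    simp only [map_mul, map_inv, FreeGroup.lift_apply_of, FG]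
    norm_num
  · -- g_j commutes with h(i, ¬j, …)
    have hhead : x.1.head? = some (i, !j) := by rw [hx]; rfl
    cases j with
    | false =>
      have : ¬(x.1.head?.map Prod.snd = some false) := by
        rw [hhead]; simp
      simp only [map_mul, map_inv, FreeGroup.lift_apply_of, FG, if_neg this, if_pos rfl]
      group
    | true =>
      simp only [map_mul, map_inv, FreeGroup.lift_apply_of, FG]
      norm_num
  · -- g_j h(i,j,…) g_j⁻¹ = h(¬i,j,…)
    have hhead : x.1.head? = some (i, j) := by rw [hx]; rfl
    have hhead' : x'.1.head? = some (!i, j) := by rw [hx']; rfl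
    cases j with
    | false =>
      have c1 : x.1.head?.map Prod.snd = some false := by rw [hhead]; rfl
      have c2 : x'.1.head?.map Prod.snd = some false := by rw [hhead']; rfl
      simp only [map_mul, map_inv, FreeGroup.lift_apply_of, FG, if_pos c1, if_pos c2, if_pos rfl]
      refine rel4 ?_
      simp only [relsG, Set.mem_union, Set.mem_setOf_eq]
      exact Or.inr ⟨false, i, rest, x, x', hx, hx', rfl⟩
    | true =>
      have c1 : ¬(x.1.head?.map Prod.snd = some false) := by rw [hhead]; simp
      have c2 : ¬(x'.1.head?.map Prod.snd = some false) := by rw [hhead']; simp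
      simp only [map_mul, map_inv, FreeGroup.lift_apply_of, FG, if_neg c1, if_neg c2]
      norm_num

def psiG : PresentedGroup relsG →* PresentedGroup relsG :=
  PresentedGroup.toGroup FG_lift

lemma psiG_of (y : X ⊕ Bool) : psiG (PresentedGroup.of y) = FG y :=
  PresentedGroup.toGroup.of _

end Aux

end ExampleGroup

open ExampleGroup

/-- In the group `G`, the subgroups `⟨H(0,0)⟩` and `⟨H(0,1)⟩` intersect
trivially. More generally, for each `pr ∈ {0,1}²` there is a retraction `H̲ → ⟨H(pr)⟩`
which is the identity on `⟨H(pr)⟩` and kills every `h(y)` with `π₁(y) ≠ pr`; hence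
`⟨H(pr)⟩ ∩ ⟨H(qr)⟩ = {1}` for distinct `pr`, `qr`. -/
theorem stmt_19 :
    (Subgroup.closure (HsetG (false, false)) ⊓ Subgroup.closure (HsetG (false, true)) = ⊥) ∧
    (∀ pr : Pair, ∃ φ : PresentedGroup relsH →* PresentedGroup relsH,
      (∀ w ∈ Subgroup.closure (HsetH pr), φ w = w) ∧
      (∀ x : X, x.1.head? ≠ some pr → φ (PresentedGroup.of x) = 1) ∧
      (∀ w : PresentedGroup relsH, φ w ∈ Subgroup.closure (HsetH pr))) ∧
    (∀ pr qr : Pair, pr ≠ qr →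
      Subgroup.closure (HsetH pr) ⊓ Subgroup.closure (HsetH qr) = ⊥)  := by
  refine ⟨?_, ?_, ?_⟩
  · -- intersection in G
    refine trivial_inter psiG ?_ ?_
    · rintro w ⟨x, hx, rfl⟩
      rw [psiG_of]
      have : x.1.head?.map Prod.snd = some false := by rw [hx]; rfl
      simp only [FG, if_pos this]
    · rintro w ⟨x, hx, rfl⟩
      rw [psiG_of]
      have : ¬(x.1.head?.map Prod.snd = some false) := by rw [hx]; simp
      simp only [FG, if_neg this]
  · -- the retraction of H̲
    intro pr
    exact ⟨phiH pr, phiH_fix pr, phiH_kill pr, phiH_range pr⟩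
  · -- intersections in H̲
    intro pr qr hne
    refine trivial_inter (phiH pr) (fun x hx => phiH_fix pr x (Subgroup.subset_closure hx)) ?_
    rintro w ⟨x, hx, rfl⟩
    refine phiH_kill pr x ?_
    rw [hx]
    intro h
    exact hne (Option.some_injective _ h).symm
end
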